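/- Let $1<p\le p(x,t)\le p_1<2<q_1\le q(x,t)\le q$ and define $\psi(x,t,v) = v^{p(x,t)-2} + v^{q(x,t)-2}$ for $v>0$. Set $\mu_1=(q_1-2)/2$ and $b_0 = \max\{1, \big(\frac{2-p+\mu_1}{q_1-2+\mu_1}\big)^{1/(q_1-p_1)}\}$. Then for every fixed $(x,t)$ and all $w \ge v > b_0$, $\frac{\psi(x,t,w)}{\psi(x,t,v)} \ge c\,\Big(\frac{w}{v}\Big)^{\mu_1}$ for some constant $c>0$ depending only on $p,p_1,q_1,q$. -/

import Mathlib

/-!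
For `v > 1` the term `v ^ (q(x,t) - 2)` dominates `v ^ (p(x,t) - 2) ≤ 1`, so
`ψ(v) ≤ 2 v ^ (q(x,t) - 2)`, while `ψ(w) ≥ w ^ (q(x,t) - 2) ≥ (w / v) ^ μ₁ v ^ (q(x,t) - 2)`
because `μ₁ ≤ q₁ - 2 ≤ q(x,t) - 2` and `w / v ≥ 1`. Hence `c = 1/2` works.
-/

open Real

lemma rpow_add_rpow_le_two_mul_rpow {v a b : ℝ} (hv : 1 ≤ v) (ha : a ≤ 0) (hb : 0 ≤ b) :
    v ^ a + v ^ b ≤ 2 * v ^ b := by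
  have hva : v ^ a ≤ 1 := rpow_le_one_of_one_le_of_nonpos hv ha
  have hvb : 1 ≤ v ^ b := one_le_rpow hv hb
  linarith

lemma rpow_div_mul_rpow_le_rpow {v w μ b : ℝ} (hv : 0 < v) (hvw : v ≤ w) (hμb : μ ≤ b) :
    (w / v) ^ μ * v ^ b ≤ w ^ b := by
  have hwv : 1 ≤ w / v := (one_le_div hv).mpr hvw
  calc (w / v) ^ μ * v ^ b
      ≤ (w / v) ^ b * v ^ b := by gcongr
    _ = w ^ b := by
      rw [div_rpow (hv.le.trans hvw) hv.le, div_mul_cancel₀ _ (rpow_pos_of_pos hv b).ne']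

lemma half_mul_rpow_div_le_rpow_add_rpow_div {v w a b μ : ℝ} (hv : 1 ≤ v) (hvw : v ≤ w)
    (ha : a ≤ 0) (hμ : 0 ≤ μ) (hμb : μ ≤ b) :
    1 / 2 * (w / v) ^ μ ≤ (w ^ a + w ^ b) / (v ^ a + v ^ b) := by
  have hv0 : 0 < v := one_pos.trans_le hv
  have hw0 : 0 < w := hv0.trans_le hvw
  rw [le_div_iff₀ (by positivity)]
  calc 1 / 2 * (w / v) ^ μ * (v ^ a + v ^ b)
      ≤ 1 / 2 * (w / v) ^ μ * (2 * v ^ b) := by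
        gcongr
        exact rpow_add_rpow_le_two_mul_rpow hv ha (hμ.trans hμb)
    _ = (w / v) ^ μ * v ^ b := by ring
    _ ≤ w ^ b := rpow_div_mul_rpow_le_rpow hv0 hvw hμb
    _ ≤ w ^ a + w ^ b := le_add_of_nonneg_left (rpow_pos_of_pos hw0 a).le

theorem stmt15_general (p p1 q1 q : ℝ) (hp1 : p1 < 2)
    (hq1 : 2 < q1) :
    ∃ c > (0:ℝ), ∀ pxt qxt : ℝ, p ≤ pxt → pxt ≤ p1 → q1 ≤ qxt → qxt ≤ q →
      ∀ v w : ℝ,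
        max 1 (((2 - p + (q1 - 2) / 2) / (q1 - 2 + (q1 - 2) / 2)) ^ (1 / (q1 - p1))) < v →
        v ≤ w →
        c * (w / v) ^ ((q1 - 2) / 2) ≤
          (w ^ (pxt - 2) + w ^ (qxt - 2)) / (v ^ (pxt - 2) + v ^ (qxt - 2)) := by
  refine ⟨1 / 2, by norm_num, fun pxt qxt _ hpxt hqxt _ v w hv hvw => ?_⟩
  have hv1 : 1 ≤ v := (le_max_left _ _).trans hv.le
  exact half_mul_rpow_div_le_rpow_add_rpow_div hv1 hvw (by linarith) (by linarith) (by linarith)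

theorem stmt15 (p p1 q1 q : ℝ) (hp : 1 < p) (hpp1 : p ≤ p1) (hp1 : p1 < 2)
    (hq1 : 2 < q1) (hq1q : q1 ≤ q) :
    ∃ c > (0:ℝ), ∀ pxt qxt : ℝ, p ≤ pxt → pxt ≤ p1 → q1 ≤ qxt → qxt ≤ q →
      ∀ v w : ℝ,
        max 1 (((2 - p + (q1 - 2) / 2) / (q1 - 2 + (q1 - 2) / 2)) ^ (1 / (q1 - p1))) < v →
        v ≤ w →
        c * (w / v) ^ ((q1 - 2) / 2) ≤
          (w ^ (pxt - 2) + w ^ (qxt - 2)) / (v ^ (pxt - 2) + v ^ (qxt - 2)) :=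
  stmt15_general p p1 q1 q hp1 hq1
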